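/- Let H = S(U(2)×U(1)) ⊂ SU(3) be the stabiliser of the decomposition ℂ³ = ℂ² ⊕ ℂ (block diagonal elements diag(A, det(A)^{-1}) with A ∈ U(2)). Let W_θ = T_θ(ℝ³) with T_θ as above, and let H_θ = T_θ^{-1} H T_θ ∩ SO(3) be the stabiliser of ℝ³ ⊂ ℂ³ corresponding to W_θ. Then: for θ ∈ (0, π/4), H_θ ≅ ℤ/2, generated by diag(1,−1,−1); for θ = 0, H_θ ≅ SO(2); for θ = π/4, H_θ ≅ O(2). -/

import Mathlib

open Complex Matrix

/-- The matrix `T_θ ∈ SU(3)`. -/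
noncomputable def Tmat (θ : ℝ) : Matrix (Fin 3) (Fin 3) ℂ :=
  !![1, 0, 0;
     0, -I * exp (-(θ : ℂ) * I) / (Real.sqrt 2 : ℂ), exp ((θ : ℂ) * I) / (Real.sqrt 2 : ℂ);
     0, -exp (-(θ : ℂ) * I) / (Real.sqrt 2 : ℂ), I * exp ((θ : ℂ) * I) / (Real.sqrt 2 : ℂ)]

/-- Membership in `H = S(U(2)×U(1)) ⊂ SU(3)`: special unitary and block diagonal with
respect to `ℂ² ⊕ ℂ`. -/
def InH (M : Matrix (Fin 3) (Fin 3) ℂ) : Prop :=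
  M ∈ Matrix.specialUnitaryGroup (Fin 3) ℂ ∧
    M 0 2 = 0 ∧ M 1 2 = 0 ∧ M 2 0 = 0 ∧ M 2 1 = 0

/-- `g` is a real special orthogonal 3×3 matrix. -/
def IsSO3 (g : Matrix (Fin 3) (Fin 3) ℝ) : Prop := g * gᵀ = 1 ∧ g.det = 1

/-- Membership in the stabiliser `H_θ = T_θ⁻¹ H T_θ ∩ SO(3)`. -/
noncomputable def InHtheta (θ : ℝ) (g : Matrix (Fin 3) (Fin 3) ℝ) : Prop :=
  IsSO3 g ∧ InH (Tmat θ * g.map (Complex.ofReal) * (Tmat θ)⁻¹)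

/-! Conjugation by the unitary matrix `T_θ` maps `SO(3)` into `SU(3)`, so `g ∈ H_θ` only asks the
four off-block entries of `T_θ g T_θ⁻¹` to vanish. Writing `e^{iθ} = cos θ + i sin θ`, their real
and imaginary parts are real linear equations in the entries of `g` with coefficients `cos θ`,
`sin θ`, `cos 2θ`, `sin 2θ`. When `cos 2θ ≠ 0` they force `g` to be a rotation by some angle `φ`
about the first axis with `sin φ · sin 2θ = 0`: this gives `SO(2)` at `θ = 0` and
`{1, diag(1,-1,-1)}` for `0 < θ < π/4`. At `θ = π/4` they say exactly that `g` maps `(0,1,1)` to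
`±(0,1,1)`. -/

lemma ofReal_add_ofReal_mul_I_eq_zero_iff (a b : ℝ) : (a : ℂ) + b * I = 0 ↔ a = 0 ∧ b = 0 := by
  rw [← mk_eq_add_mul_I, Complex.ext_iff]
  simp

lemma exp_ofReal_mul_I_eq (θ : ℝ) : exp ((θ : ℂ) * I) = Real.cos θ + Real.sin θ * I := by
  rw [Complex.exp_mul_I, ← ofReal_cos, ← ofReal_sin]

lemma exp_neg_ofReal_mul_I_eq (θ : ℝ) : exp (-(θ : ℂ) * I) = Real.cos θ - Real.sin θ * I := by
  rw [← ofReal_neg, exp_ofReal_mul_I_eq, Real.cos_neg, Real.sin_neg, ofReal_neg]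
  ring

lemma inv_sqrt_two_sq : ((Real.sqrt 2 : ℝ) : ℂ)⁻¹ ^ 2 = 2⁻¹ := by
  rw [inv_pow, ← ofReal_pow]
  simp

section Unitary

variable {n : Type*} [Fintype n] [DecidableEq n]

lemma map_ofReal_mem_specialUnitaryGroup {g : Matrix n n ℝ} (hg : g * gᵀ = 1) (hdet : g.det = 1) :
    g.map ofReal ∈ specialUnitaryGroup n ℂ := by
  have hstar : star (g.map ofReal) = gᵀ.map ofReal := by
    ext i j
    simp
  refine mem_specialUnitaryGroup_iff.2 ⟨mem_unitaryGroup_iff.2 ?_, ?_⟩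
  · rw [hstar]
    change g.map ofRealHom * gᵀ.map ofRealHom = 1
    rw [← Matrix.map_mul, hg, Matrix.map_one _ (map_zero _) (map_one _)]
  · change (ofRealHom.mapMatrix g).det = 1
    rw [← ofRealHom.map_det, hdet, map_one]

lemma mul_mul_star_mem_specialUnitaryGroup {U A : Matrix n n ℂ} (hU : U ∈ unitaryGroup n ℂ)
    (hA : A ∈ specialUnitaryGroup n ℂ) : U * A * star U ∈ specialUnitaryGroup n ℂ := by
  rw [mem_specialUnitaryGroup_iff] at hA ⊢
  refine ⟨mul_mem (mul_mem hU hA.1) (Unitary.star_mem hU), ?_⟩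
  rw [det_mul, det_mul, hA.2, mul_one, ← det_mul, mem_unitaryGroup_iff.1 hU, det_one]

end Unitary

lemma Tmat_mul_star (θ : ℝ) : Tmat θ * star (Tmat θ) = 1 := by
  have hI := I_sq
  have hr := inv_sqrt_two_sq
  have hT : (Real.cos θ : ℂ) ^ 2 + (Real.sin θ : ℂ) ^ 2 = 1 := by
    exact_mod_cast Real.cos_sq_add_sin_sq θ
  simp only [Tmat, exp_ofReal_mul_I_eq, exp_neg_ofReal_mul_I_eq]
  generalize Real.cos θ = c, Real.sin θ = s at *
  ext i j
  fin_cases i <;> fin_cases j <;>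
    simp [Matrix.mul_apply, Fin.sum_univ_three, Matrix.star_apply] <;> grind

noncomputable def conjT (θ : ℝ) (g : Matrix (Fin 3) (Fin 3) ℝ) : Matrix (Fin 3) (Fin 3) ℂ :=
  Tmat θ * g.map ofReal * star (Tmat θ)

lemma conjT_apply (θ : ℝ) (g : Matrix (Fin 3) (Fin 3) ℝ) :
    conjT θ g 0 2 = -((g 0 1 * Real.cos θ + g 0 2 * Real.sin θ : ℝ)
      + (g 0 1 * Real.sin θ + g 0 2 * Real.cos θ : ℝ) * I) / Real.sqrt 2 ∧
    conjT θ g 2 0 = ((-(g 1 0 * Real.cos θ + g 2 0 * Real.sin θ) : ℝ)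
      + (g 1 0 * Real.sin θ + g 2 0 * Real.cos θ : ℝ) * I) / Real.sqrt 2 ∧
    conjT θ g 1 2 = ((-((g 1 2 + g 2 1) * Real.cos (2 * θ)) : ℝ)
      + (g 1 1 - g 2 2 + (g 1 2 - g 2 1) * Real.sin (2 * θ) : ℝ) * I) / 2 ∧
    conjT θ g 2 1 = ((-((g 1 2 + g 2 1) * Real.cos (2 * θ)) : ℝ)
      + (g 2 2 - g 1 1 + (g 1 2 - g 2 1) * Real.sin (2 * θ) : ℝ) * I) / 2 := by
  have hI := I_sq
  have hr := inv_sqrt_two_sq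
  have hT : (Real.cos θ : ℂ) ^ 2 + (Real.sin θ : ℂ) ^ 2 = 1 := by
    exact_mod_cast Real.cos_sq_add_sin_sq θ
  simp only [conjT, Tmat, exp_ofReal_mul_I_eq, exp_neg_ofReal_mul_I_eq, Real.cos_two_mul',
    Real.sin_two_mul]
  generalize Real.cos θ = c, Real.sin θ = s at *
  refine ⟨?_, ?_, ?_, ?_⟩ <;>
    simp [Matrix.mul_apply, Fin.sum_univ_three, Matrix.star_apply, Matrix.vecMul, dotProduct] <;>
    grind

lemma inHtheta_iff (θ : ℝ) (g : Matrix (Fin 3) (Fin 3) ℝ) :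
    InHtheta θ g ↔ IsSO3 g ∧
      (g 0 1 * Real.cos θ + g 0 2 * Real.sin θ = 0 ∧ g 0 1 * Real.sin θ + g 0 2 * Real.cos θ = 0) ∧
      (g 1 0 * Real.cos θ + g 2 0 * Real.sin θ = 0 ∧ g 1 0 * Real.sin θ + g 2 0 * Real.cos θ = 0) ∧
      (g 1 2 + g 2 1) * Real.cos (2 * θ) = 0 ∧ g 1 1 = g 2 2 ∧
      (g 1 2 - g 2 1) * Real.sin (2 * θ) = 0 := by
  have hInH : InHtheta θ g ↔ IsSO3 g ∧
      conjT θ g 0 2 = 0 ∧ conjT θ g 1 2 = 0 ∧ conjT θ g 2 0 = 0 ∧ conjT θ g 2 1 = 0 := by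
    rw [InHtheta, InH, inv_eq_right_inv (Tmat_mul_star θ)]
    refine and_congr_right fun hg => and_iff_right ?_
    exact mul_mul_star_mem_specialUnitaryGroup (mem_unitaryGroup_iff.2 (Tmat_mul_star θ))
      (map_ofReal_mem_specialUnitaryGroup hg.1 hg.2)
  have hsqrt : ((Real.sqrt 2 : ℝ) : ℂ) ≠ 0 := by simp
  obtain ⟨h02, h20, h12, h21⟩ := conjT_apply θ g
  simp only [hInH, h02, h20, h12, h21, neg_div, neg_eq_zero, div_eq_zero_iff, hsqrt, two_ne_zero,
    or_false, ofReal_add_ofReal_mul_I_eq_zero_iff]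
  refine and_congr_right fun _ => and_congr_right fun _ => ?_
  constructor
  · rintro ⟨⟨hcos, h11⟩, h20, -, hsin⟩
    exact ⟨h20, hcos, by linarith, by linarith⟩
  · rintro ⟨h20, hcos, h11, hsin⟩
    exact ⟨⟨hcos, by linarith⟩, h20, hcos, by linarith⟩

lemma eq_zero_of_mul_cos_add_mul_sin_eq_zero {a b θ : ℝ}
    (h₁ : a * Real.cos θ + b * Real.sin θ = 0) (h₂ : a * Real.sin θ + b * Real.cos θ = 0)
    (hθ : Real.cos (2 * θ) ≠ 0) : a = 0 ∧ b = 0 := by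
  rw [Real.cos_two_mul'] at hθ
  constructor
  · refine (mul_eq_zero.1 ?_).resolve_right hθ
    linear_combination Real.cos θ * h₁ - Real.sin θ * h₂
  · refine (mul_eq_zero.1 ?_).resolve_right hθ
    linear_combination Real.cos θ * h₂ - Real.sin θ * h₁

def rotX (c s : ℝ) : Matrix (Fin 3) (Fin 3) ℝ :=
  !![1, 0, 0; 0, c, -s; 0, s, c]

lemma isSO3_rotX {c s : ℝ} (h : c ^ 2 + s ^ 2 = 1) : IsSO3 (rotX c s) := by
  constructor
  · ext i j
    fin_cases i <;> fin_cases j <;>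
      simp [rotX, Matrix.mul_apply, Fin.sum_univ_three] <;> grind
  · simp [rotX, Matrix.det_fin_three]
    linear_combination h

lemma IsSO3.eq_rotX {g : Matrix (Fin 3) (Fin 3) ℝ} (hg : IsSO3 g) (h01 : g 0 1 = 0)
    (h02 : g 0 2 = 0) (h10 : g 1 0 = 0) (h20 : g 2 0 = 0) (h11 : g 1 1 = g 2 2)
    (h12 : g 1 2 = -g 2 1) :
    g 1 1 ^ 2 + g 2 1 ^ 2 = 1 ∧ g = rotX (g 1 1) (g 2 1) := by
  have hrow : g 1 1 ^ 2 + g 2 1 ^ 2 = 1 := by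
    have := congrFun (congrFun hg.1 1) 1
    simp [Matrix.mul_apply, Fin.sum_univ_three, h10, h12] at this
    linear_combination this
  have h00 : g 0 0 = 1 := by
    have := hg.2
    rw [Matrix.det_fin_three, h01, h02, h10, h20, ← h11, h12] at this
    linear_combination this - g 0 0 * hrow
  refine ⟨hrow, ?_⟩
  ext i j
  fin_cases i <;> fin_cases j <;> simp [rotX, h00, h01, h02, h10, h20, h11, h12]

lemma inHtheta_iff_of_cos_ne_zero {θ : ℝ} (hθ : Real.cos (2 * θ) ≠ 0)
    (g : Matrix (Fin 3) (Fin 3) ℝ) :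
    InHtheta θ g ↔ ∃ c s : ℝ, c ^ 2 + s ^ 2 = 1 ∧ s * Real.sin (2 * θ) = 0 ∧ g = rotX c s := by
  rw [inHtheta_iff]
  constructor
  · rintro ⟨hg, ⟨h01, h02⟩, ⟨h10, h20⟩, hcos, h11, hsin⟩
    obtain ⟨h01, h02⟩ := eq_zero_of_mul_cos_add_mul_sin_eq_zero h01 h02 hθ
    obtain ⟨h10, h20⟩ := eq_zero_of_mul_cos_add_mul_sin_eq_zero h10 h20 hθ
    have h12 : g 1 2 = -g 2 1 := by linarith [(mul_eq_zero.1 hcos).resolve_right hθ]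
    obtain ⟨hcs, hrot⟩ := hg.eq_rotX h01 h02 h10 h20 h11 h12
    exact ⟨g 1 1, g 2 1, hcs, by linear_combination -hsin / 2 + Real.sin (2 * θ) / 2 * h12, hrot⟩
  · rintro ⟨c, s, hcs, hs, rfl⟩
    have hs' : (-s - s) * Real.sin (2 * θ) = 0 := by linear_combination (-2) * hs
    exact ⟨isSO3_rotX hcs, by simpa [rotX] using hs'⟩

lemma inHtheta_zero_iff (g : Matrix (Fin 3) (Fin 3) ℝ) :
    InHtheta 0 g ↔ ∃ c s : ℝ, c ^ 2 + s ^ 2 = 1 ∧ g = rotX c s := by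
  simp [inHtheta_iff_of_cos_ne_zero (θ := 0) (by simp)]

lemma inHtheta_iff_of_mem_Ioo {θ : ℝ} (hθ : θ ∈ Set.Ioo 0 (Real.pi / 4))
    (g : Matrix (Fin 3) (Fin 3) ℝ) :
    InHtheta θ g ↔ g = 1 ∨ g = !![1, 0, 0; 0, -1, 0; 0, 0, -1] := by
  obtain ⟨h0, hπ⟩ := hθ
  have hcos : 0 < Real.cos (2 * θ) := Real.cos_pos_of_mem_Ioo ⟨by linarith, by linarith⟩
  have hsin : 0 < Real.sin (2 * θ) := Real.sin_pos_of_pos_of_lt_pi (by linarith) (by linarith)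
  have h1 : (1 : Matrix (Fin 3) (Fin 3) ℝ) = rotX 1 0 := by
    ext i j
    fin_cases i <;> fin_cases j <;> simp [rotX]
  rw [inHtheta_iff_of_cos_ne_zero hcos.ne', h1]
  constructor
  · rintro ⟨c, s, hcs, hs, rfl⟩
    obtain rfl : s = 0 := (mul_eq_zero.1 hs).resolve_right hsin.ne'
    obtain rfl | rfl : c = 1 ∨ c = -1 := sq_eq_one_iff.1 (by simpa using hcs)
    · exact Or.inl rfl
    · right
      simp [rotX]
  · rintro (h | h)
    · exact ⟨1, 0, by norm_num, by simp, h⟩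
    · exact ⟨-1, 0, by norm_num, by simp, by simp [h, rotX]⟩

lemma transpose_mulVec_eq_smul_of_mulVec_eq_smul {R n : Type*} [CommRing R] [Fintype n]
    [DecidableEq n] {g : Matrix n n R} {v : n → R} {ε : R} (hg : gᵀ * g = 1) (hε : ε * ε = 1)
    (hv : g *ᵥ v = ε • v) : gᵀ *ᵥ v = ε • v :=
  calc gᵀ *ᵥ v = ε • (gᵀ *ᵥ (ε • v)) := by rw [mulVec_smul, smul_smul, hε, one_smul]
    _ = ε • (gᵀ *ᵥ (g *ᵥ v)) := by rw [hv]
    _ = ε • v := by rw [mulVec_mulVec, hg, one_mulVec]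

lemma mulVec_zero_one_one_eq_or_eq_neg_iff {g : Matrix (Fin 3) (Fin 3) ℝ} (hg : g * gᵀ = 1) :
    (g *ᵥ ![0, 1, 1] = ![0, 1, 1] ∨ g *ᵥ ![0, 1, 1] = -![0, 1, 1]) ↔
      g 0 1 + g 0 2 = 0 ∧ g 1 0 + g 2 0 = 0 ∧ g 1 1 = g 2 2 ∧ g 1 2 = g 2 1 := by
  constructor
  · intro h
    obtain ⟨ε, hε, hv⟩ : ∃ ε : ℝ, ε * ε = 1 ∧ g *ᵥ ![0, 1, 1] = ε • ![0, 1, 1] := by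
      rcases h with h | h
      · exact ⟨1, by norm_num, by rw [h, one_smul]⟩
      · exact ⟨-1, by norm_num, by rw [h, neg_one_smul]⟩
    have hvt := transpose_mulVec_eq_smul_of_mulVec_eq_smul (mul_eq_one_comm.1 hg) hε hv
    have hv0 := congrFun hv 0
    have hv1 := congrFun hv 1
    have hv2 := congrFun hv 2
    have hvt0 := congrFun hvt 0
    have hvt1 := congrFun hvt 1
    have hvt2 := congrFun hvt 2
    simp [mulVec, dotProduct, Fin.sum_univ_three] at hv0 hv1 hv2 hvt0 hvt1 hvt2
    refine ⟨hv0, hvt0, by linarith, by linarith⟩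
  · rintro ⟨h0, h0', h11, h12⟩
    have hv : g *ᵥ ![0, 1, 1] = (g 1 1 + g 1 2) • ![0, 1, 1] := by
      ext i
      fin_cases i <;> simp [mulVec, dotProduct, Fin.sum_univ_three] <;> linarith
    have ht : (g 1 1 + g 1 2) ^ 2 = 1 := by
      have r11 := congrFun (congrFun hg 1) 1
      have r12 := congrFun (congrFun hg 1) 2
      simp [Matrix.mul_apply, Fin.sum_univ_three] at r11 r12
      linear_combination r11 + r12 - g 1 0 * h0' + g 1 1 * h12 + g 1 2 * h11
    rcases sq_eq_one_iff.1 ht with ht | ht <;> rw [hv, ht]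
    · exact Or.inl (one_smul _ _)
    · exact Or.inr (neg_one_smul _ _)

lemma inHtheta_pi_div_four_iff (g : Matrix (Fin 3) (Fin 3) ℝ) :
    InHtheta (Real.pi / 4) g ↔
      IsSO3 g ∧ (g *ᵥ ![0, 1, 1] = ![0, 1, 1] ∨ g *ᵥ ![0, 1, 1] = -![0, 1, 1]) := by
  have hπ : 2 * (Real.pi / 4) = Real.pi / 2 := by ring
  have hk : Real.sqrt 2 / 2 ≠ 0 := by positivity
  rw [inHtheta_iff, Real.cos_pi_div_four, Real.sin_pi_div_four, hπ, Real.cos_pi_div_two,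
    Real.sin_pi_div_two]
  refine and_congr_right fun hg => ?_
  rw [mulVec_zero_one_one_eq_or_eq_neg_iff hg.1]
  simp only [← add_mul, mul_eq_zero, hk, or_false, mul_zero, mul_one, sub_eq_zero, and_self,
    true_and]

/-- the stabiliser `H_θ` is:
* for `θ ∈ (0, π/4)`, the two-element group `{1, diag(1,−1,−1)} ≅ ℤ/2`;
* for `θ = 0`, the group `SO(2)` of rotations in the plane of the last two coordinates;
* for `θ = π/4`, the group `≅ O(2)` of special orthogonal matrices preserving the line
  spanned by `(0,1,1)` (i.e. mapping `(0,1,1)` to `±(0,1,1)`). -/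
theorem stmt_6 :
    (∀ θ ∈ Set.Ioo 0 (Real.pi / 4), ∀ g,
        InHtheta θ g ↔ (g = 1 ∨ g = !![1, 0, 0; 0, -1, 0; 0, 0, -1])) ∧
    (∀ g, InHtheta 0 g ↔
        ∃ c s : ℝ, c ^ 2 + s ^ 2 = 1 ∧ g = !![1, 0, 0; 0, c, -s; 0, s, c]) ∧
    (∀ g, InHtheta (Real.pi / 4) g ↔
        (IsSO3 g ∧ (g.mulVec ![0, 1, 1] = ![0, 1, 1] ∨ g.mulVec ![0, 1, 1] = -![0, 1, 1]))) :=
  ⟨fun _ hθ g => inHtheta_iff_of_mem_Ioo hθ g, inHtheta_zero_iff, inHtheta_pi_div_four_iff⟩
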